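/- Let $T_1, T_2, T_3$ be three pairwise commuting invertible measure-preserving transformations of a probability space $(X,\mu)$. For $\{i,j\}\subseteq\{1,2,3\}$ let $\mathcal{I}_{ij}$ be the $\sigma$-algebra of sets invariant under both $T_i$ and $T_j$, and let $\mathcal{I}$ be the $\sigma$-algebra of sets invariant under all three. Then for all $A\in\mathcal{I}_{12}$, $B\in\mathcal{I}_{13}$, $C\in\mathcal{I}_{23}$, $\int_X 1_A\,1_B\,1_C\,d\mu = \int_X \mathsf{E}_\mu(1_A\mid\mathcal{I})\,\mathsf{E}_\mu(1_B\mid\mathcal{I})\,\mathsf{E}_\mu(1_C\mid\mathcal{I})\,d\mu$. -/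

import Mathlib

open MeasureTheory

/-- The σ-algebra of sets invariant (modulo `μ`-null sets) under `T`. -/
noncomputable def invSigma {X : Type*} [MeasurableSpace X] (μ : Measure X) (T : X → X) :
    MeasurableSpace X where
  MeasurableSet' A := MeasurableSet A ∧ μ (symmDiff A (T ⁻¹' A)) = 0
  measurableSet_empty := ⟨MeasurableSet.empty, by simp⟩
  measurableSet_compl A hA := ⟨hA.1.compl, by
    rw [Set.preimage_compl, compl_symmDiff_compl]; exact hA.2⟩
  measurableSet_iUnion f hf := ⟨MeasurableSet.iUnion fun i => (hf i).1, by
    have hsub : symmDiff (⋃ i, f i) (T ⁻¹' ⋃ i, f i) ⊆ ⋃ i, symmDiff (f i) (T ⁻¹' f i) := by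
      rw [Set.preimage_iUnion]
      intro x hx
      rcases Set.mem_symmDiff.1 hx with ⟨hx1, hx2⟩ | ⟨hx1, hx2⟩
      · rcases Set.mem_iUnion.1 hx1 with ⟨i, hi⟩
        exact Set.mem_iUnion.2 ⟨i, Set.mem_symmDiff.2
          (Or.inl ⟨hi, fun h => hx2 (Set.mem_iUnion.2 ⟨i, h⟩)⟩)⟩
      · rcases Set.mem_iUnion.1 hx1 with ⟨i, hi⟩
        exact Set.mem_iUnion.2 ⟨i, Set.mem_symmDiff.2
          (Or.inr ⟨hi, fun h => hx2 (Set.mem_iUnion.2 ⟨i, h⟩)⟩)⟩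
    exact measure_mono_null hsub (measure_iUnion_null fun i => (hf i).2)⟩

namespace IsoHelper

variable {X : Type*} [m0 : MeasurableSpace X] {μ : Measure X}

lemma invSigma_le (μ : Measure X) (T : X → X) : invSigma μ T ≤ m0 := fun _ hs => hs.1

lemma integrable_of_bdd [IsFiniteMeasure μ] {f : X → ℝ} {C : ℝ} (hf : AEStronglyMeasurable f μ)
    (hb : ∀ᵐ x ∂μ, |f x| ≤ C) : Integrable f μ :=
  ⟨hf, HasFiniteIntegral.of_bounded (C := C) (by simpa [Real.norm_eq_abs] using hb)⟩

lemma condexp_abs_le_one [IsProbabilityMeasure μ] {m : MeasurableSpace X} (hm : m ≤ m0)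
    {f : X → ℝ} (hf : Integrable f μ) (hb : ∀ᵐ x ∂μ, |f x| ≤ 1) :
    ∀ᵐ x ∂μ, |(μ[f|m]) x| ≤ 1 := by
  have h1 : μ[f|m] ≤ᵐ[μ] μ[(fun _ => (1:ℝ))|m] :=
    condExp_mono hf (integrable_const 1) (hb.mono fun x hx => (abs_le.1 hx).2)
  have h2 : μ[(fun _ => (-1:ℝ))|m] ≤ᵐ[μ] μ[f|m] :=
    condExp_mono (integrable_const _) hf (hb.mono fun x hx => (abs_le.1 hx).1)
  rw [condExp_const hm] at h1
  rw [condExp_const hm] at h2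
  filter_upwards [h1, h2] with x ha hb'
  rw [abs_le]; exact ⟨hb', ha⟩

lemma integral_comp_mp {T : X → X} (hT : MeasurePreserving T μ μ) {g : X → ℝ}
    (hg : AEStronglyMeasurable g μ) : ∫ x, g (T x) ∂μ = ∫ x, g x ∂μ := by
  conv_rhs => rw [← hT.map_eq]
  rw [integral_map hT.aemeasurable (by rwa [hT.map_eq])]

lemma preimage_mem_invSigma {T S : X → X} (hT : MeasurePreserving T μ μ)
    (hS : Measurable S) (hcomm : T ∘ S = S ∘ T) {E : Set X}
    (hE : MeasurableSet[invSigma μ S] E) : MeasurableSet[invSigma μ S] (T ⁻¹' E) := by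
  obtain ⟨hEm, hE0⟩ := hE
  refine ⟨hT.measurable hEm, ?_⟩
  have h1 : S ⁻¹' (T ⁻¹' E) = T ⁻¹' (S ⁻¹' E) := by
    rw [← Set.preimage_comp, hcomm, Set.preimage_comp]
  rw [h1, ← Set.preimage_symmDiff, hT.measure_preimage]
  · exact hE0
  · exact (hEm.symmDiff (hS hEm)).nullMeasurableSet

lemma indicator_comp_ae_eq {T : X → X} {A : Set X} (h0 : μ (symmDiff A (T ⁻¹' A)) = 0) :
    (fun x => A.indicator (fun _ => (1:ℝ)) (T x)) =ᵐ[μ] A.indicator (fun _ => (1:ℝ)) := by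
  have h : (T ⁻¹' A : Set X) =ᵐ[μ] A := by
    rw [← measure_symmDiff_eq_zero_iff, symmDiff_comm]; exact h0
  have h2 := indicator_ae_eq_of_ae_eq_set (f := fun _ => (1:ℝ)) h
  have h3 : (fun x => A.indicator (fun _ => (1:ℝ)) (T x))
      = (T ⁻¹' A).indicator (fun _ => (1:ℝ)) := by
    funext x
    by_cases hx : T x ∈ A
    · simp [Set.indicator_of_mem, hx, Set.mem_preimage]
    · simp [Set.indicator_of_notMem, hx, Set.mem_preimage]
  rw [h3]; exact h2

omit m0 in
lemma indicator_abs_le (A : Set X) : ∀ x, |A.indicator (fun _ => (1:ℝ)) x| ≤ 1 := fun x => by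
  by_cases h : x ∈ A
  · simp [Set.indicator_of_mem, h]
  · simp [Set.indicator_of_notMem, h]

omit m0 in
lemma integral_mul_condexp {m m0 : MeasurableSpace X} (hm : m ≤ m0) {μ : Measure X}
    [IsProbabilityMeasure μ] {w f : X → ℝ} (hw : StronglyMeasurable[m] w) (hwb : ∀ᵐ x ∂μ, |w x| ≤ 1)
    (hf : AEStronglyMeasurable f μ) (hfb : ∀ᵐ x ∂μ, |f x| ≤ 1) :
    ∫ x, w x * f x ∂μ = ∫ x, w x * (μ[f|m]) x ∂μ := by
  haveI : IsFiniteMeasure (μ.trim hm) := isFiniteMeasure_trim hm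
  have hfi : Integrable f μ := integrable_of_bdd hf hfb
  have hwb1 : ∀ᵐ x ∂μ, |w x * f x| ≤ 1 := by
    filter_upwards [hwb, hfb] with x h1 h2
    calc |w x * f x| = |w x| * |f x| := abs_mul _ _
      _ ≤ 1 * 1 := mul_le_mul h1 h2 (abs_nonneg _) zero_le_one
      _ = 1 := mul_one 1
  have hwf : Integrable (w * f) μ :=
    integrable_of_bdd (((hw.mono hm).aestronglyMeasurable).mul hf) hwb1
  have h := condExp_mul_of_stronglyMeasurable_left hw hwf hfi
  calc ∫ x, w x * f x ∂μ = ∫ x, (w * f) x ∂μ := rfl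
    _ = ∫ x, (μ[w * f|m]) x ∂μ := (integral_condExp hm).symm
    _ = ∫ x, (w * μ[f|m]) x ∂μ := integral_congr_ae h
    _ = ∫ x, w x * (μ[f|m]) x ∂μ := rfl


lemma mul_abs_le_one {u v : X → ℝ} (hu : ∀ᵐ x ∂μ, |u x| ≤ 1) (hv : ∀ᵐ x ∂μ, |v x| ≤ 1) :
    ∀ᵐ x ∂μ, |u x * v x| ≤ 1 := by
  filter_upwards [hu, hv] with x h1 h2
  calc |u x * v x| = |u x| * |v x| := abs_mul _ _
    _ ≤ 1 * 1 := mul_le_mul h1 h2 (abs_nonneg _) zero_le_one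
    _ = 1 := mul_one 1

/-- Key invariance: if `f` is (a.e.) invariant under `T` and `T` commutes with `S`,
then `μ[f | invSigma μ S]` is a.e. invariant under `T`. -/
lemma condexp_comp_ae_eq [IsProbabilityMeasure μ] {T S : X → X}
    (hT : MeasurePreserving T μ μ) (hS : MeasurePreserving S μ μ)
    (hcomm : T ∘ S = S ∘ T) {f : X → ℝ} (hfm : AEStronglyMeasurable f μ)
    (hfb : ∀ᵐ x ∂μ, |f x| ≤ 1) (hfT : (fun x => f (T x)) =ᵐ[μ] f) :
    (fun x => (μ[f|invSigma μ S]) (T x)) =ᵐ[μ] μ[f|invSigma μ S] := by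
  have hm : invSigma μ S ≤ m0 := invSigma_le μ S
  haveI : IsFiniteMeasure (μ.trim hm) := isFiniteMeasure_trim hm
  have hfi : Integrable f μ := integrable_of_bdd hfm hfb
  set k := μ[f|invSigma μ S] with hk_def
  have hk_sm : StronglyMeasurable[invSigma μ S] k := stronglyMeasurable_condExp
  have hk_m0 : StronglyMeasurable k := hk_sm.mono hm
  have hkb : ∀ᵐ x ∂μ, |k x| ≤ 1 := condexp_abs_le_one hm hfi hfb
  have hTm : @Measurable X X (invSigma μ S) (invSigma μ S) T :=
    fun E hE => preimage_mem_invSigma hT hS.measurable hcomm hE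
  have hkT_sm : StronglyMeasurable[invSigma μ S] (fun x => k (T x)) :=
    hk_sm.comp_measurable hTm
  have hkT_m0 : StronglyMeasurable (fun x => k (T x)) := hkT_sm.mono hm
  have hkTb : ∀ᵐ x ∂μ, |k (T x)| ≤ 1 := hT.quasiMeasurePreserving.ae hkb
  have pull1 : ∫ x, k (T x) * f x ∂μ = ∫ x, k (T x) * k x ∂μ := by
    have := integral_mul_condexp hm hkT_sm hkTb hfm hfb
    rw [← hk_def] at this; exact this
  have pull2 : ∫ x, k x * f x ∂μ = ∫ x, k x * k x ∂μ := by
    have := integral_mul_condexp hm hk_sm hkb hfm hfb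
    rw [← hk_def] at this; exact this
  have step3 : ∫ x, k (T x) * f x ∂μ = ∫ x, k (T x) * f (T x) ∂μ :=
    integral_congr_ae (by filter_upwards [hfT] with x hx; rw [hx])
  have step4 : ∫ x, k (T x) * f (T x) ∂μ = ∫ x, k x * f x ∂μ :=
    integral_comp_mp hT (hk_m0.aestronglyMeasurable.mul hfm)
  have step5 : ∫ x, k (T x) * k (T x) ∂μ = ∫ x, k x * k x ∂μ :=
    integral_comp_mp hT (hk_m0.aestronglyMeasurable.mul hk_m0.aestronglyMeasurable)
  have cross : ∫ x, k (T x) * k x ∂μ = ∫ x, k x * k x ∂μ := by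
    rw [← pull1, step3, step4, pull2]
  have ia : Integrable (fun x => k (T x) * k (T x)) μ :=
    integrable_of_bdd (hkT_m0.aestronglyMeasurable.mul hkT_m0.aestronglyMeasurable)
      (mul_abs_le_one hkTb hkTb)
  have ib : Integrable (fun x => 2 * (k (T x) * k x)) μ := by
    refine integrable_of_bdd (C := 2)
      (((hkT_m0.aestronglyMeasurable.mul hk_m0.aestronglyMeasurable)).const_mul 2) ?_
    filter_upwards [mul_abs_le_one hkTb hkb] with x hx
    calc |2 * (k (T x) * k x)| = 2 * |k (T x) * k x| := by
          rw [abs_mul, abs_two]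
      _ ≤ 2 * 1 := by linarith
      _ = 2 := mul_one 2
  have ic : Integrable (fun x => k x * k x) μ :=
    integrable_of_bdd (hk_m0.aestronglyMeasurable.mul hk_m0.aestronglyMeasurable)
      (mul_abs_le_one hkb hkb)
  have isub : Integrable (fun x => (k (T x) - k x) ^ 2) μ := by
    have : (fun x => (k (T x) - k x) ^ 2)
        = fun x => k (T x) * k (T x) - 2 * (k (T x) * k x) + k x * k x := by
      funext x; ring
    rw [this]; exact (ia.sub ib).add ic
  have hexp : ∫ x, (k (T x) - k x) ^ 2 ∂μ = 0 := by
    have e1 : (fun x => (k (T x) - k x) ^ 2)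
        = fun x => k (T x) * k (T x) - 2 * (k (T x) * k x) + k x * k x := by
      funext x; ring
    calc ∫ x, (k (T x) - k x) ^ 2 ∂μ
        = ∫ x, (k (T x) * k (T x) - 2 * (k (T x) * k x) + k x * k x) ∂μ := by rw [e1]
      _ = (∫ x, (k (T x) * k (T x) - 2 * (k (T x) * k x)) ∂μ) + ∫ x, k x * k x ∂μ :=
          integral_add (ia.sub ib) ic
      _ = (∫ x, k (T x) * k (T x) ∂μ) - (∫ x, 2 * (k (T x) * k x) ∂μ)
            + ∫ x, k x * k x ∂μ := by rw [integral_sub ia ib]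
      _ = (∫ x, k (T x) * k (T x) ∂μ) - 2 * (∫ x, k (T x) * k x ∂μ)
            + ∫ x, k x * k x ∂μ := by rw [MeasureTheory.integral_const_mul]
      _ = 0 := by rw [step5, cross]; ring
  have hae : (fun x => (k (T x) - k x) ^ 2) =ᵐ[μ] 0 :=
    (integral_eq_zero_iff_of_nonneg_ae (Filter.Eventually.of_forall fun x => sq_nonneg _)
      isub).1 hexp
  filter_upwards [hae] with x hx
  have hx' : (k (T x) - k x) ^ 2 = 0 := hx
  have := sq_eq_zero_iff.1 hx'
  linarith


lemma preimage_measurableSet_invSigma {T : X → X} {k : X → ℝ} (hk : Measurable k)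
    (hinv : (fun x => k (T x)) =ᵐ[μ] k) {s : Set ℝ} (hs : MeasurableSet s) :
    MeasurableSet[invSigma μ T] (k ⁻¹' s) := by
  refine ⟨hk hs, ?_⟩
  have hsub : symmDiff (k ⁻¹' s) (T ⁻¹' (k ⁻¹' s)) ⊆ {x | ¬ k (T x) = k x} := by
    intro x hx
    simp only [Set.mem_symmDiff, Set.mem_preimage] at hx
    rcases hx with ⟨hx1, hx2⟩ | ⟨hx1, hx2⟩
    · intro h; exact hx2 (by rw [h]; exact hx1)
    · intro h; exact hx2 (by rw [← h]; exact hx1)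
  exact measure_mono_null hsub (ae_iff.1 hinv)

omit m0 in
lemma condexp_inf_eq' {m mI m0 : MeasurableSpace X} {μ : Measure X} [IsProbabilityMeasure μ]
    (hm : m ≤ m0) (hImI : mI ≤ m) (hI : mI ≤ m0) {f : X → ℝ} (hfi : Integrable f μ)
    (hkI : @Measurable X ℝ mI _ (μ[f|m])) : μ[f|m] =ᵐ[μ] μ[f|mI] := by
  haveI : IsFiniteMeasure (μ.trim hI) := isFiniteMeasure_trim hI
  haveI : IsFiniteMeasure (μ.trim hm) := isFiniteMeasure_trim hm
  exact ae_eq_condExp_of_forall_setIntegral_eq hI hfi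
    (fun s _ _ => integrable_condExp.integrableOn)
    (fun s hs _ => setIntegral_condExp hm hfi (hImI s hs))
    (hkI.stronglyMeasurable.aestronglyMeasurable)

end IsoHelper

open IsoHelper in
/-- For three pairwise commuting measure-preserving transformations, the three
pairwise isotropy σ-algebras `I₁₂, I₁₃, I₂₃` are relatively independent over
the fully invariant σ-algebra `I = I₁ ⊓ I₂ ⊓ I₃`. -/
theorem isotropy_relatively_independent_triple {X : Type*} [m0 : MeasurableSpace X]
    (μ : Measure X) [IsProbabilityMeasure μ] (T₁ T₂ T₃ : X → X)
    (hT1 : MeasurePreserving T₁ μ μ) (hT2 : MeasurePreserving T₂ μ μ)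
    (hT3 : MeasurePreserving T₃ μ μ)
    (hT1bij : Function.Bijective T₁) (hT2bij : Function.Bijective T₂)
    (hT3bij : Function.Bijective T₃)
    (hcomm12 : T₁ ∘ T₂ = T₂ ∘ T₁) (hcomm13 : T₁ ∘ T₃ = T₃ ∘ T₁)
    (hcomm23 : T₂ ∘ T₃ = T₃ ∘ T₂) :
    ∀ A B C : Set X,
      MeasurableSet[invSigma μ T₁ ⊓ invSigma μ T₂] A →
      MeasurableSet[invSigma μ T₁ ⊓ invSigma μ T₃] B →
      MeasurableSet[invSigma μ T₂ ⊓ invSigma μ T₃] C →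
      ∫ x, A.indicator (fun _ => (1 : ℝ)) x * B.indicator (fun _ => (1 : ℝ)) x *
          C.indicator (fun _ => (1 : ℝ)) x ∂μ =
        ∫ x, ((μ[A.indicator (fun _ => (1 : ℝ)) | invSigma μ T₁ ⊓ invSigma μ T₂ ⊓ invSigma μ T₃]) x) *
            ((μ[B.indicator (fun _ => (1 : ℝ)) | invSigma μ T₁ ⊓ invSigma μ T₂ ⊓ invSigma μ T₃]) x) *
            ((μ[C.indicator (fun _ => (1 : ℝ)) | invSigma μ T₁ ⊓ invSigma μ T₂ ⊓ invSigma μ T₃]) x) ∂μ := by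
  intro A B C hA hB hC
  obtain ⟨hA1, hA2⟩ := MeasurableSpace.measurableSet_inf.1 hA
  obtain ⟨hB1, hB3⟩ := MeasurableSpace.measurableSet_inf.1 hB
  obtain ⟨hC2, hC3⟩ := MeasurableSpace.measurableSet_inf.1 hC
  have hm2 : invSigma μ T₂ ≤ m0 := invSigma_le μ T₂
  have hm3 : invSigma μ T₃ ≤ m0 := invSigma_le μ T₃
  have hI : invSigma μ T₁ ⊓ invSigma μ T₂ ⊓ invSigma μ T₃ ≤ m0 :=
    le_trans inf_le_right hm3
  have hIle2 : invSigma μ T₁ ⊓ invSigma μ T₂ ⊓ invSigma μ T₃ ≤ invSigma μ T₂ :=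
    le_trans inf_le_left inf_le_right
  -- indicator functions
  have hfAm : AEStronglyMeasurable (A.indicator (fun _ => (1:ℝ))) μ :=
    (stronglyMeasurable_const.indicator hA1.1).aestronglyMeasurable
  have hfBm : AEStronglyMeasurable (B.indicator (fun _ => (1:ℝ))) μ :=
    (stronglyMeasurable_const.indicator hB1.1).aestronglyMeasurable
  have hfCm : AEStronglyMeasurable (C.indicator (fun _ => (1:ℝ))) μ :=
    (stronglyMeasurable_const.indicator hC2.1).aestronglyMeasurable
  have hfAb := ae_of_all μ (indicator_abs_le A)
  have hfBb := ae_of_all μ (indicator_abs_le B)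
  have hfCb := ae_of_all μ (indicator_abs_le C)
  have hfA1 := indicator_comp_ae_eq (T := T₁) (A := A) hA1.2
  have hfA2 := indicator_comp_ae_eq (T := T₂) (A := A) hA2.2
  have hfB1 := indicator_comp_ae_eq (T := T₁) (A := B) hB1.2
  have hfB3 := indicator_comp_ae_eq (T := T₃) (A := B) hB3.2
  -- a := condexp of 1_A onto invSigma T₃
  have ha1 := condexp_comp_ae_eq hT1 hT3 hcomm13 hfAm hfAb hfA1
  have ha2 := condexp_comp_ae_eq hT2 hT3 hcomm23 hfAm hfAb hfA2
  have ham0 : Measurable (μ[A.indicator (fun _ => (1:ℝ))|invSigma μ T₃]) :=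
    (stronglyMeasurable_condExp.mono hm3).measurable
  have haI : @Measurable X ℝ (invSigma μ T₁ ⊓ invSigma μ T₂ ⊓ invSigma μ T₃) _
      (μ[A.indicator (fun _ => (1:ℝ))|invSigma μ T₃]) := by
    intro s hs
    exact MeasurableSpace.measurableSet_inf.2 ⟨MeasurableSpace.measurableSet_inf.2
      ⟨preimage_measurableSet_invSigma ham0 ha1 hs,
       preimage_measurableSet_invSigma ham0 ha2 hs⟩,
      stronglyMeasurable_condExp.measurable hs⟩
  have hab : ∀ᵐ x ∂μ, |(μ[A.indicator (fun _ => (1:ℝ))|invSigma μ T₃]) x| ≤ 1 :=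
    condexp_abs_le_one hm3 (integrable_of_bdd hfAm hfAb) hfAb
  have haeqA : μ[A.indicator (fun _ => (1:ℝ))|invSigma μ T₃]
      =ᵐ[μ] μ[A.indicator (fun _ => (1:ℝ))|invSigma μ T₁ ⊓ invSigma μ T₂ ⊓ invSigma μ T₃] :=
    condexp_inf_eq' hm3 inf_le_right hI (integrable_of_bdd hfAm hfAb) haI
  -- b := condexp of 1_B onto invSigma T₂
  have hb1 := condexp_comp_ae_eq hT1 hT2 hcomm12 hfBm hfBb hfB1
  have hb3 := condexp_comp_ae_eq hT3 hT2 hcomm23.symm hfBm hfBb hfB3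
  have hbm0 : Measurable (μ[B.indicator (fun _ => (1:ℝ))|invSigma μ T₂]) :=
    (stronglyMeasurable_condExp.mono hm2).measurable
  have hbI : @Measurable X ℝ (invSigma μ T₁ ⊓ invSigma μ T₂ ⊓ invSigma μ T₃) _
      (μ[B.indicator (fun _ => (1:ℝ))|invSigma μ T₂]) := by
    intro s hs
    exact MeasurableSpace.measurableSet_inf.2 ⟨MeasurableSpace.measurableSet_inf.2
      ⟨preimage_measurableSet_invSigma hbm0 hb1 hs,
       stronglyMeasurable_condExp.measurable hs⟩,
      preimage_measurableSet_invSigma hbm0 hb3 hs⟩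
  have hbb : ∀ᵐ x ∂μ, |(μ[B.indicator (fun _ => (1:ℝ))|invSigma μ T₂]) x| ≤ 1 :=
    condexp_abs_le_one hm2 (integrable_of_bdd hfBm hfBb) hfBb
  have haeqB : μ[B.indicator (fun _ => (1:ℝ))|invSigma μ T₂]
      =ᵐ[μ] μ[B.indicator (fun _ => (1:ℝ))|invSigma μ T₁ ⊓ invSigma μ T₂ ⊓ invSigma μ T₃] :=
    condexp_inf_eq' hm2 hIle2 hI (integrable_of_bdd hfBm hfBb) hbI
  -- chain of integral identities
  have E1 : ∫ x, A.indicator (fun _ => (1:ℝ)) x * B.indicator (fun _ => (1:ℝ)) x *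
      C.indicator (fun _ => (1:ℝ)) x ∂μ
      = ∫ x, (B.indicator (fun _ => (1:ℝ)) x * C.indicator (fun _ => (1:ℝ)) x) *
        A.indicator (fun _ => (1:ℝ)) x ∂μ :=
    integral_congr_ae (Filter.Eventually.of_forall fun x => by ring)
  have hw1 : StronglyMeasurable[invSigma μ T₃]
      (fun x => B.indicator (fun _ => (1:ℝ)) x * C.indicator (fun _ => (1:ℝ)) x) :=
    (stronglyMeasurable_const.indicator hB3).mul (stronglyMeasurable_const.indicator hC3)
  have E2 := integral_mul_condexp hm3 hw1 (mul_abs_le_one hfBb hfCb) hfAm hfAb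
  have E3 : ∫ x, (B.indicator (fun _ => (1:ℝ)) x * C.indicator (fun _ => (1:ℝ)) x) *
      (μ[A.indicator (fun _ => (1:ℝ))|invSigma μ T₃]) x ∂μ
      = ∫ x, ((μ[A.indicator (fun _ => (1:ℝ))|invSigma μ T₃]) x *
        C.indicator (fun _ => (1:ℝ)) x) * B.indicator (fun _ => (1:ℝ)) x ∂μ :=
    integral_congr_ae (Filter.Eventually.of_forall fun x => by ring)
  have hw2 : StronglyMeasurable[invSigma μ T₂]
      (fun x => (μ[A.indicator (fun _ => (1:ℝ))|invSigma μ T₃]) x *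
        C.indicator (fun _ => (1:ℝ)) x) :=
    ((haI.mono hIle2 le_rfl).stronglyMeasurable).mul (stronglyMeasurable_const.indicator hC2)
  have E4 := integral_mul_condexp hm2 hw2 (mul_abs_le_one hab hfCb) hfBm hfBb
  have E5 : ∫ x, ((μ[A.indicator (fun _ => (1:ℝ))|invSigma μ T₃]) x *
      C.indicator (fun _ => (1:ℝ)) x) * (μ[B.indicator (fun _ => (1:ℝ))|invSigma μ T₂]) x ∂μ
      = ∫ x, ((μ[A.indicator (fun _ => (1:ℝ))|invSigma μ T₃]) x *
        (μ[B.indicator (fun _ => (1:ℝ))|invSigma μ T₂]) x) *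
        C.indicator (fun _ => (1:ℝ)) x ∂μ :=
    integral_congr_ae (Filter.Eventually.of_forall fun x => by ring)
  have hw3 : StronglyMeasurable[invSigma μ T₁ ⊓ invSigma μ T₂ ⊓ invSigma μ T₃]
      (fun x => (μ[A.indicator (fun _ => (1:ℝ))|invSigma μ T₃]) x *
        (μ[B.indicator (fun _ => (1:ℝ))|invSigma μ T₂]) x) :=
    (haI.stronglyMeasurable).mul (hbI.stronglyMeasurable)
  have E6 := integral_mul_condexp hI hw3 (mul_abs_le_one hab hbb) hfCm hfCb
  have E7 : ∫ x, ((μ[A.indicator (fun _ => (1:ℝ))|invSigma μ T₃]) x *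
      (μ[B.indicator (fun _ => (1:ℝ))|invSigma μ T₂]) x) *
      (μ[C.indicator (fun _ => (1:ℝ))|invSigma μ T₁ ⊓ invSigma μ T₂ ⊓ invSigma μ T₃]) x ∂μ
      = ∫ x, ((μ[A.indicator (fun _ => (1:ℝ))|invSigma μ T₁ ⊓ invSigma μ T₂ ⊓ invSigma μ T₃]) x) *
        ((μ[B.indicator (fun _ => (1:ℝ))|invSigma μ T₁ ⊓ invSigma μ T₂ ⊓ invSigma μ T₃]) x) *
        ((μ[C.indicator (fun _ => (1:ℝ))|invSigma μ T₁ ⊓ invSigma μ T₂ ⊓ invSigma μ T₃]) x) ∂μ := by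
    refine integral_congr_ae ?_
    filter_upwards [haeqA, haeqB] with x h1 h2
    rw [h1, h2]
  rw [E1, E2, E3, E4, E5, E6, E7]
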